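/- arXiv:2507.11095 — 4 statements merged into one kernel-verified Lean document; each statement's English description precedes it below -/
import Mathlib

section
/- Let λ > 0, let A_{k-1} be an invertible n×n real matrix with Γ_{k-1} = A_{k-1}⁻¹, let Q_k be an n×2 real matrix, D = diag(1, −1), and set A_k = λ·A_{k-1} + Q_k D Q_kᵀ. Let b_{k-1}, d_k ∈ ℝⁿ and b_k = λ·b_{k-1} + d_k. Assume the capacitance matrix S = λ·D + Q_kᵀ Γ_{k-1} Q_k is invertible and A_k is invertible. Then θ_k := A_k⁻¹ b_k satisfies θ_k = (I − Γ_{k-1} Q_k S⁻¹ Q_kᵀ) (θ_{k-1} + Γ_{k-1} d_k / λ), where θ_{k-1} = Γ_{k-1} b_{k-1} and I is the n×n identity matrix. -/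
/-! Since `D * D = 1`, we have `D⁻¹ = D`, so `S` is `λ` times the capacitance matrix
`D⁻¹ + Qᵀ (λ A_{k-1})⁻¹ Q` of the Woodbury identity for `A_k = λ A_{k-1} + Q D Qᵀ`. Hence
`A_k⁻¹ = λ⁻¹ (I - Γ_{k-1} Q S⁻¹ Qᵀ) Γ_{k-1}`, and applying this to `b_k = λ b_{k-1} + d_k`
gives the update. -/

open Matrix

namespace Matrix

variable {m n α : Type*} [Fintype m] [DecidableEq m] [Fintype n] [DecidableEq n] [Field α]

theorem inv_smul_of_ne_zero {k : α} (hk : k ≠ 0) (A : Matrix n n α) : (k • A)⁻¹ = k⁻¹ • A⁻¹ := by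
  by_cases hA : IsUnit A.det
  · refine inv_eq_left_inv ?_
    rw [smul_mul_smul_comm, inv_mul_cancel₀ hk, one_smul, nonsing_inv_mul _ hA]
  · have hkA : ¬IsUnit (k • A).det := by
      rwa [det_smul, IsUnit.mul_iff, not_and_or, or_iff_right (not_not.mpr (pow_ne_zero _ hk).isUnit)]
    rw [nonsing_inv_apply_not_isUnit _ hA, nonsing_inv_apply_not_isUnit _ hkA, smul_zero]

theorem inv_smul_add_mul_mul {A : Matrix n n α} {U : Matrix n m α} {C : Matrix m m α}
    {V : Matrix m n α} {lam : α} (hlam : lam ≠ 0) (hA : IsUnit A) (hC : IsUnit C)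
    (hS : IsUnit (lam • C⁻¹ + V * A⁻¹ * U)) :
    (lam • A + U * C * V)⁻¹ = lam⁻¹ • ((1 - A⁻¹ * U * (lam • C⁻¹ + V * A⁻¹ * U)⁻¹ * V) * A⁻¹) := by
  set S := lam • C⁻¹ + V * A⁻¹ * U
  have hinvA : (lam • A)⁻¹ = lam⁻¹ • A⁻¹ := inv_smul_of_ne_zero hlam A
  have hcap : C⁻¹ + V * (lam • A)⁻¹ * U = lam⁻¹ • S := by
    rw [hinvA, smul_add, smul_smul, inv_mul_cancel₀ hlam, one_smul, Matrix.mul_smul, Matrix.smul_mul]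
  have hinvS : (lam⁻¹ • S)⁻¹ = lam • S⁻¹ := by
    rw [inv_smul_of_ne_zero (inv_ne_zero hlam), inv_inv]
  have hlamA : IsUnit (lam • A) := hA.smul (Units.mk0 lam hlam)
  have hcapUnit : IsUnit (C⁻¹ + V * (lam • A)⁻¹ * U) :=
    hcap ▸ hS.smul (Units.mk0 lam⁻¹ (inv_ne_zero hlam))
  rw [add_mul_mul_inv_eq_sub (lam • A) U C V hlamA hC hcapUnit, hcap, hinvS, hinvA]
  simp only [sub_mul, one_mul, smul_sub, Matrix.smul_mul, Matrix.mul_smul, smul_smul,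
    Matrix.mul_assoc, mul_inv_cancel₀ hlam, one_smul]

end Matrix

theorem parameter_rank_two_update_general
    (n : ℕ) (lam : ℝ) (hlam : 0 < lam)
    (Akm Γkm : Matrix (Fin n) (Fin n) ℝ) (hAinv : IsUnit Akm) (hΓ : Γkm = Akm⁻¹)
    (Q : Matrix (Fin n) (Fin 2) ℝ)
    (D : Matrix (Fin 2) (Fin 2) ℝ) (hD : D = Matrix.diagonal ![1, -1])
    (Ak : Matrix (Fin n) (Fin n) ℝ) (hAk : Ak = lam • Akm + Q * D * Qᵀ)
    (bkm dk bk : Fin n → ℝ) (hbk : bk = lam • bkm + dk)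
    (S : Matrix (Fin 2) (Fin 2) ℝ) (hS : S = lam • D + Qᵀ * Γkm * Q)
    (hSinv : IsUnit S)
    (θk θkm : Fin n → ℝ) (hθk : θk = Ak⁻¹ *ᵥ bk) (hθkm : θkm = Γkm *ᵥ bkm) :
    θk = (1 - Γkm * Q * S⁻¹ * Qᵀ) *ᵥ (θkm + (1 / lam) • (Γkm *ᵥ dk)) := by
  have hDD : D * D = 1 := by
    rw [hD, diagonal_mul_diagonal, ← diagonal_one]
    congr 1
    ext i
    fin_cases i <;> simp
  have hDinv : D⁻¹ = D := inv_eq_left_inv hDD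
  have hAk_inv : Ak⁻¹ = lam⁻¹ • ((1 - Γkm * Q * S⁻¹ * Qᵀ) * Γkm) := by
    rw [hAk, inv_smul_add_mul_mul hlam.ne' hAinv (.of_mul_eq_one D hDD)
      (by rwa [hDinv, ← hΓ, ← hS]), hDinv, ← hΓ, ← hS]
  rw [hθk, hAk_inv, hbk, hθkm, smul_mulVec, ← mulVec_mulVec, mulVec_add Γkm, mulVec_smul Γkm,
    mulVec_add, mulVec_add, mulVec_smul, mulVec_smul, smul_add, smul_smul,
    inv_mul_cancel₀ hlam.ne', one_smul, one_div]

/-- Recursive parameter update with rank-two updates: with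
`A_k = λ•A_{k-1} + Q_k D Q_kᵀ`, `b_k = λ•b_{k-1} + d_k`,
`Γ_{k-1} = A_{k-1}⁻¹` and invertible capacitance matrix
`S = λ•D + Q_kᵀ Γ_{k-1} Q_k`, the vector `θ_k = A_k⁻¹ b_k` satisfies
`θ_k = (I − Γ_{k-1} Q_k S⁻¹ Q_kᵀ)(θ_{k-1} + Γ_{k-1} d_k / λ)` where
`θ_{k-1} = Γ_{k-1} b_{k-1}`. -/
theorem parameter_rank_two_update
    (n : ℕ) (lam : ℝ) (hlam : 0 < lam)
    (Akm Γkm : Matrix (Fin n) (Fin n) ℝ) (hAinv : IsUnit Akm) (hΓ : Γkm = Akm⁻¹)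
    (Q : Matrix (Fin n) (Fin 2) ℝ)
    (D : Matrix (Fin 2) (Fin 2) ℝ) (hD : D = Matrix.diagonal ![1, -1])
    (Ak : Matrix (Fin n) (Fin n) ℝ) (hAk : Ak = lam • Akm + Q * D * Qᵀ)
    (bkm dk bk : Fin n → ℝ) (hbk : bk = lam • bkm + dk)
    (S : Matrix (Fin 2) (Fin 2) ℝ) (hS : S = lam • D + Qᵀ * Γkm * Q)
    (hSinv : IsUnit S) (hAkinv : IsUnit Ak)
    (θk θkm : Fin n → ℝ) (hθk : θk = Ak⁻¹ *ᵥ bk) (hθkm : θkm = Γkm *ᵥ bkm) :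
    θk = (1 - Γkm * Q * S⁻¹ * Qᵀ) *ᵥ (θkm + (1 / lam) • (Γkm *ᵥ dk)) :=
  parameter_rank_two_update_general n lam hlam Akm Γkm hAinv hΓ Q D hD Ak hAk bkm dk bk hbk S hS
    hSinv θk θkm hθk hθkm
end

section
/- Let λ > 0, let A_{k-1} and Γ_{k-1} be symmetric n×n real matrices, Q an n×2 real matrix, D = diag(1, −1), and suppose S = λ·D + Qᵀ Γ_{k-1} Q is invertible. Define A_k = λ·A_{k-1} + Q D Qᵀ and Γ_k = (1/λ)·(Γ_{k-1} − Γ_{k-1} Q S⁻¹ Qᵀ Γ_{k-1}). Then the matrix inversion errors E_j = I − Γ_j A_j satisfy the error model E_k = (I − Γ_{k-1} Q S⁻¹ Qᵀ) E_{k-1}. -/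
open Matrix

/-- Error model for the matrix inversion errors `E_j = I − Γ_j A_j` under the
rank-two recursion: `E_k = (I − Γ_{k-1} Q S⁻¹ Qᵀ) E_{k-1}`. -/
theorem matrix_inversion_error_model
    (n : ℕ) (lam : ℝ) (hlam : 0 < lam)
    (Akm Γkm : Matrix (Fin n) (Fin n) ℝ) (hAsymm : Akm.IsSymm) (hΓsymm : Γkm.IsSymm)
    (Q : Matrix (Fin n) (Fin 2) ℝ)
    (D : Matrix (Fin 2) (Fin 2) ℝ) (hD : D = Matrix.diagonal ![1, -1])
    (S : Matrix (Fin 2) (Fin 2) ℝ) (hS : S = lam • D + Qᵀ * Γkm * Q)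
    (hSinv : IsUnit S)
    (Ak Γk : Matrix (Fin n) (Fin n) ℝ)
    (hAk : Ak = lam • Akm + Q * D * Qᵀ)
    (hΓk : Γk = (1 / lam) • (Γkm - Γkm * Q * S⁻¹ * Qᵀ * Γkm)) :
    1 - Γk * Ak = (1 - Γkm * Q * S⁻¹ * Qᵀ) * (1 - Γkm * Akm) := by
  have hlam' : lam ≠ 0 := ne_of_gt hlam
  have hDD : D * D = 1 := by
    subst hD
    rw [Matrix.diagonal_mul_diagonal]
    ext i j
    fin_cases i <;> fin_cases j <;> simp
  have hSi : S⁻¹ * S = 1 := Matrix.nonsing_inv_mul S ((Matrix.isUnit_iff_isUnit_det S).mp hSinv)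
  have hQS : Qᵀ * Γkm * Q = S - lam • D := by rw [hS, add_sub_cancel_left]
  have hkey : Γkm * Q * S⁻¹ * Qᵀ * Γkm * (Q * D * Qᵀ)
      = Γkm * (Q * D * Qᵀ) - lam • (Γkm * Q * S⁻¹ * Qᵀ) := by
    calc Γkm * Q * S⁻¹ * Qᵀ * Γkm * (Q * D * Qᵀ)
        = Γkm * Q * S⁻¹ * (Qᵀ * Γkm * Q) * (D * Qᵀ) := by simp only [Matrix.mul_assoc]
      _ = Γkm * Q * S⁻¹ * (S - lam • D) * (D * Qᵀ) := by rw [hQS]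
      _ = Γkm * Q * (S⁻¹ * S) * (D * Qᵀ) - lam • (Γkm * Q * S⁻¹ * (D * D) * Qᵀ) := by
          simp only [Matrix.mul_sub, Matrix.sub_mul, Matrix.mul_smul, Matrix.smul_mul,
            Matrix.mul_assoc]
      _ = Γkm * (Q * D * Qᵀ) - lam • (Γkm * Q * S⁻¹ * Qᵀ) := by
          rw [hSi, hDD]; simp [Matrix.mul_assoc]
  have hmain : Γk * Ak
      = Γkm * Akm - Γkm * Q * S⁻¹ * Qᵀ * (Γkm * Akm) + Γkm * Q * S⁻¹ * Qᵀ := by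
    rw [hΓk, hAk]
    rw [Matrix.smul_mul, Matrix.sub_mul, Matrix.mul_add, Matrix.mul_add]
    rw [show Γkm * Q * S⁻¹ * Qᵀ * Γkm * (Q * D * Qᵀ)
        = Γkm * (Q * D * Qᵀ) - lam • (Γkm * Q * S⁻¹ * Qᵀ) from hkey]
    rw [Matrix.mul_smul, Matrix.mul_smul]
    have : (1 / lam) * lam = 1 := by field_simp
    simp only [smul_sub, smul_add, smul_smul, this, one_smul]
    noncomm_ring
  rw [hmain]
  noncomm_ring
end

section
/- Let 0 < λ ≤ 1, let A_{k-1} be a symmetric invertible n×n real matrix with Γ_{k-1} = A_{k-1}⁻¹, let Q be an n×2 real matrix, D = diag(1, −1), and suppose S = λ·D + Qᵀ Γ_{k-1} Q is invertible. Let A_k = λ·A_{k-1} + Q D Qᵀ, and let the parameter error evolve as θ̃_k = (I − Γ_{k-1} Q S⁻¹ Qᵀ) θ̃_{k-1}. Then the Lyapunov function values V_j = θ̃_jᵀ A_j θ̃_j satisfy V_k − V_{k-1} = −λ · θ̃_{k-1}ᵀ Q S⁻¹ Qᵀ θ̃_{k-1} − (1 − λ)·V_{k-1}. -/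
open Matrix

/-- First difference of the Lyapunov function `V_j = θ̃_jᵀ A_j θ̃_j` along the
parameter error dynamics `θ̃_k = (I − Γ_{k-1} Q S⁻¹ Qᵀ) θ̃_{k-1}` (under exact
inversion `Γ_{k-1} = A_{k-1}⁻¹`):
`V_k − V_{k-1} = −λ·θ̃_{k-1}ᵀ Q S⁻¹ Qᵀ θ̃_{k-1} − (1 − λ)·V_{k-1}`. -/
theorem lyapunov_first_difference
    (n : ℕ) (lam : ℝ) (hlam : 0 < lam) (hlam1 : lam ≤ 1)
    (Akm : Matrix (Fin n) (Fin n) ℝ) (hAsymm : Akm.IsSymm) (hAinv : IsUnit Akm)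
    (Γkm : Matrix (Fin n) (Fin n) ℝ) (hΓ : Γkm = Akm⁻¹)
    (Q : Matrix (Fin n) (Fin 2) ℝ)
    (D : Matrix (Fin 2) (Fin 2) ℝ) (hD : D = Matrix.diagonal ![1, -1])
    (S : Matrix (Fin 2) (Fin 2) ℝ) (hS : S = lam • D + Qᵀ * Γkm * Q)
    (hSinv : IsUnit S)
    (Ak : Matrix (Fin n) (Fin n) ℝ) (hAk : Ak = lam • Akm + Q * D * Qᵀ)
    (θtkm θtk : Fin n → ℝ)
    (hθtk : θtk = (1 - Γkm * Q * S⁻¹ * Qᵀ) *ᵥ θtkm) :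
    θtk ⬝ᵥ (Ak *ᵥ θtk) - θtkm ⬝ᵥ (Akm *ᵥ θtkm) =
      -lam * (θtkm ⬝ᵥ ((Q * S⁻¹ * Qᵀ) *ᵥ θtkm)) -
        (1 - lam) * (θtkm ⬝ᵥ (Akm *ᵥ θtkm)) := by
  set M : Matrix (Fin n) (Fin n) ℝ := 1 - Γkm * Q * S⁻¹ * Qᵀ with hM
  have hAdet : IsUnit Akm.det := (Matrix.isUnit_iff_isUnit_det _).mp hAinv
  have hSdet : IsUnit S.det := (Matrix.isUnit_iff_isUnit_det _).mp hSinv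
  have hAΓ : Akm * Γkm = 1 := by rw [hΓ]; exact Matrix.mul_nonsing_inv _ hAdet
  have hΓA : Γkm * Akm = 1 := by rw [hΓ]; exact Matrix.nonsing_inv_mul _ hAdet
  have hΓsymm : Γkmᵀ = Γkm := by
    rw [hΓ, Matrix.transpose_nonsing_inv, hAsymm.eq]
  have hDsymm : Dᵀ = D := by rw [hD]; exact Matrix.diagonal_transpose _
  have hSsymm : Sᵀ = S := by
    rw [hS]; simp [Matrix.transpose_add, Matrix.transpose_mul, hΓsymm, hDsymm,
      Matrix.mul_assoc]
  have hSisymm : (S⁻¹)ᵀ = S⁻¹ := by rw [Matrix.transpose_nonsing_inv, hSsymm]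
  have hSS : S * S⁻¹ = 1 := Matrix.mul_nonsing_inv _ hSdet
  have hDD : D * D = 1 := by
    rw [hD]
    ext i j
    fin_cases i <;> fin_cases j <;>
      simp [Matrix.mul_apply, Fin.sum_univ_two, Matrix.diagonal]
  have hQΓQ : Qᵀ * Γkm * Q = S - lam • D := by rw [hS]; abel
  -- key product identity
  have key : Ak * M = lam • Akm := by
    have e1 : Akm * (Γkm * Q * S⁻¹ * Qᵀ) = Q * S⁻¹ * Qᵀ := by
      calc Akm * (Γkm * Q * S⁻¹ * Qᵀ) = (Akm * Γkm) * Q * S⁻¹ * Qᵀ := by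
            simp only [Matrix.mul_assoc]
        _ = Q * S⁻¹ * Qᵀ := by rw [hAΓ, Matrix.one_mul]
    have e2 : (Q * D * Qᵀ) * (Γkm * Q * S⁻¹ * Qᵀ)
        = Q * D * Qᵀ - lam • (Q * S⁻¹ * Qᵀ) := by
      calc (Q * D * Qᵀ) * (Γkm * Q * S⁻¹ * Qᵀ)
          = Q * D * (Qᵀ * Γkm * Q) * S⁻¹ * Qᵀ := by simp only [Matrix.mul_assoc]
        _ = Q * D * (S - lam • D) * S⁻¹ * Qᵀ := by rw [hQΓQ]
        _ = Q * D * S * S⁻¹ * Qᵀ - lam • (Q * (D * D) * S⁻¹ * Qᵀ) := by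
            simp only [Matrix.mul_sub, Matrix.sub_mul, Matrix.mul_smul,
              Matrix.smul_mul, Matrix.mul_assoc]
        _ = Q * D * Qᵀ - lam • (Q * S⁻¹ * Qᵀ) := by
            rw [hDD, Matrix.mul_one]
            congr 1
            calc Q * D * S * S⁻¹ * Qᵀ = Q * D * (S * S⁻¹) * Qᵀ := by
                  simp only [Matrix.mul_assoc]
              _ = Q * D * Qᵀ := by rw [hSS, Matrix.mul_one]
    rw [hAk, hM]
    rw [Matrix.mul_sub, Matrix.mul_one, Matrix.add_mul, Matrix.smul_mul, e1, e2]
    abel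
  have hMT : Mᵀ = 1 - Q * S⁻¹ * Qᵀ * Γkm := by
    rw [hM]
    simp [Matrix.transpose_sub, Matrix.transpose_mul, hΓsymm, hSisymm,
      Matrix.mul_assoc]
  have key2 : Mᵀ * (Ak * M) = lam • Akm - lam • (Q * S⁻¹ * Qᵀ) := by
    have e3 : Q * S⁻¹ * Qᵀ * Γkm * Akm = Q * S⁻¹ * Qᵀ := by
      calc Q * S⁻¹ * Qᵀ * Γkm * Akm = Q * S⁻¹ * Qᵀ * (Γkm * Akm) := by
            simp only [Matrix.mul_assoc]
        _ = Q * S⁻¹ * Qᵀ := by rw [hΓA, Matrix.mul_one]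
    rw [key, hMT, Matrix.sub_mul, Matrix.one_mul, Matrix.mul_smul, e3]
  -- convert to quadratic forms
  have hquad : θtk ⬝ᵥ (Ak *ᵥ θtk) = θtkm ⬝ᵥ ((Mᵀ * (Ak * M)) *ᵥ θtkm) := by
    rw [hθtk, Matrix.mulVec_mulVec]
    conv_rhs => rw [← Matrix.mulVec_mulVec, Matrix.dotProduct_mulVec,
      Matrix.vecMul_transpose]
  rw [hquad, key2, Matrix.sub_mulVec, Matrix.smul_mulVec,
    Matrix.smul_mulVec, dotProduct_sub]
  simp only [dotProduct_smul, smul_dotProduct, smul_eq_mul]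
  ring
end

section
/- Let λ > 0, and for each k let Γ_{k-1} be a symmetric n×n real matrix, Q_k an n×2 real matrix, D = diag(1, −1), with S_k = λ·D + Q_kᵀ Γ_{k-1} Q_k invertible, and let A_k = λ·A_{k-1} + Q_k D Q_kᵀ and Γ_k = (1/λ)·(Γ_{k-1} − Γ_{k-1} Q_k S_k⁻¹ Q_kᵀ Γ_{k-1}) for k = 1, …, N, starting from symmetric A_0, Γ_0. Then the matrix inversion error E_N = I − Γ_N A_N is given by the product formula E_N = [∏_{k=N}^{1} (I − Γ_{k-1} Q_k S_k⁻¹ Q_kᵀ)] · E_0, where the factors are ordered with index k = N leftmost and k = 1 rightmost and E_0 = I − Γ_0 A_0. -/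
open Matrix

lemma rls_step {n : ℕ} {lam : ℝ} (hlam : lam ≠ 0)
    (G A A' Γ' : Matrix (Fin n) (Fin n) ℝ) (Q : Matrix (Fin n) (Fin 2) ℝ)
    (D S : Matrix (Fin 2) (Fin 2) ℝ)
    (hDD : D * D = 1) (hSu : IsUnit S)
    (hS : S = lam • D + Qᵀ * G * Q)
    (hA : A' = lam • A + Q * D * Qᵀ)
    (hΓ : Γ' = (1 / lam) • (G - G * Q * S⁻¹ * Qᵀ * G)) :
    1 - Γ' * A' = (1 - G * Q * S⁻¹ * Qᵀ) * (1 - G * A) := by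
  have hSS : S⁻¹ * S = 1 := nonsing_inv_mul S ((Matrix.isUnit_iff_isUnit_det S).mp hSu)
  have hQGQ : Qᵀ * G * Q = S - lam • D := by rw [hS]; abel
  have hDQ : D * (D * Qᵀ) = Qᵀ := by rw [← Matrix.mul_assoc, hDD, Matrix.one_mul]
  have e1 : G * Q * S⁻¹ * Qᵀ * G * (Q * D * Qᵀ)
      = G * Q * D * Qᵀ - lam • (G * Q * S⁻¹ * Qᵀ) := by
    have h : G * Q * S⁻¹ * Qᵀ * G * (Q * D * Qᵀ) = G * Q * (S⁻¹ * (Qᵀ * G * Q)) * (D * Qᵀ) := by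
      simp only [Matrix.mul_assoc]
    rw [h, hQGQ, Matrix.mul_sub, hSS, Matrix.mul_smul]
    simp only [Matrix.sub_mul, Matrix.mul_sub, Matrix.one_mul, Matrix.smul_mul,
      Matrix.mul_smul, Matrix.mul_assoc, hDQ]
  have e2 : (G - G * Q * S⁻¹ * Qᵀ * G) * (Q * D * Qᵀ) = lam • (G * Q * S⁻¹ * Qᵀ) := by
    rw [Matrix.sub_mul, e1]
    simp only [Matrix.mul_assoc]
    abel
  rw [hΓ, hA, Matrix.smul_mul, Matrix.mul_add, e2, Matrix.mul_smul, smul_add, smul_smul,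
    smul_smul, one_div, inv_mul_cancel₀ hlam, one_smul, one_smul]
  simp only [Matrix.sub_mul, Matrix.mul_sub, Matrix.mul_one, Matrix.one_mul, Matrix.mul_assoc]
  abel

lemma rls_aux (n : ℕ) (lam : ℝ) (hlam : lam ≠ 0)
    (A Γ : ℕ → Matrix (Fin n) (Fin n) ℝ)
    (Q : ℕ → Matrix (Fin n) (Fin 2) ℝ)
    (D : Matrix (Fin 2) (Fin 2) ℝ) (hDD : D * D = 1)
    (S : ℕ → Matrix (Fin 2) (Fin 2) ℝ) :
    ∀ N : ℕ,
    (∀ k, 1 ≤ k → k ≤ N → S k = lam • D + (Q k)ᵀ * Γ (k - 1) * Q k) →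
    (∀ k, 1 ≤ k → k ≤ N → IsUnit (S k)) →
    (∀ k, 1 ≤ k → k ≤ N → A k = lam • A (k - 1) + Q k * D * (Q k)ᵀ) →
    (∀ k, 1 ≤ k → k ≤ N →
      Γ k = (1 / lam) • (Γ (k - 1) - Γ (k - 1) * Q k * (S k)⁻¹ * (Q k)ᵀ * Γ (k - 1))) →
    1 - Γ N * A N =
      (((List.range N).map fun j =>
          1 - Γ (N - j - 1) * Q (N - j) * (S (N - j))⁻¹ * (Q (N - j))ᵀ).prod) *
        (1 - Γ 0 * A 0) := by
  intro N
  induction N with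
  | zero => intro _ _ _ _; simp
  | succ N ih =>
    intro hS hSu hA hΓ
    have ih' := ih (fun k h1 h2 => hS k h1 (h2.trans (Nat.le_succ N)))
      (fun k h1 h2 => hSu k h1 (h2.trans (Nat.le_succ N)))
      (fun k h1 h2 => hA k h1 (h2.trans (Nat.le_succ N)))
      (fun k h1 h2 => hΓ k h1 (h2.trans (Nat.le_succ N)))
    have hlist : ((List.range (N + 1)).map fun j =>
          1 - Γ (N + 1 - j - 1) * Q (N + 1 - j) * (S (N + 1 - j))⁻¹ * (Q (N + 1 - j))ᵀ)
        = (1 - Γ N * Q (N + 1) * (S (N + 1))⁻¹ * (Q (N + 1))ᵀ) ::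
          ((List.range N).map fun j =>
            1 - Γ (N - j - 1) * Q (N - j) * (S (N - j))⁻¹ * (Q (N - j))ᵀ) := by
      rw [List.range_succ_eq_map, List.map_cons, List.map_map]
      simp [Function.comp, Nat.succ_sub_succ]
    rw [hlist, List.prod_cons, Matrix.mul_assoc, ← ih']
    have h1 : 1 ≤ N + 1 := Nat.le_add_left 1 N
    have h2 : N + 1 ≤ N + 1 := le_refl _
    have := rls_step hlam (Γ N) (A N) (A (N + 1)) (Γ (N + 1)) (Q (N + 1)) D (S (N + 1))
      hDD (hSu (N + 1) h1 h2) ?_ ?_ ?_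
    · exact this
    · have := hS (N + 1) h1 h2; simpa using this
    · have := hA (N + 1) h1 h2; simpa using this
    · have := hΓ (N + 1) h1 h2; simpa using this

/-- Product formula for the matrix inversion error of the rank-two RLS
recursion: `E_N = (∏_{k=N}^{1} (I − Γ_{k-1} Q_k S_k⁻¹ Q_kᵀ)) · E_0`, the factors
ordered with `k = N` leftmost and `k = 1` rightmost, `E_k = I − Γ_k A_k`. -/
theorem matrix_inversion_error_product_formula
    (n N : ℕ) (lam : ℝ) (hlam : 0 < lam)
    (A Γ : ℕ → Matrix (Fin n) (Fin n) ℝ)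
    (Q : ℕ → Matrix (Fin n) (Fin 2) ℝ)
    (D : Matrix (Fin 2) (Fin 2) ℝ) (hD : D = Matrix.diagonal ![1, -1])
    (S : ℕ → Matrix (Fin 2) (Fin 2) ℝ)
    (hS : ∀ k, 1 ≤ k → k ≤ N → S k = lam • D + (Q k)ᵀ * Γ (k - 1) * Q k)
    (hSinv : ∀ k, 1 ≤ k → k ≤ N → IsUnit (S k))
    (hΓsymm : ∀ k, 1 ≤ k → k ≤ N → (Γ (k - 1)).IsSymm)
    (hA : ∀ k, 1 ≤ k → k ≤ N → A k = lam • A (k - 1) + Q k * D * (Q k)ᵀ)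
    (hΓ : ∀ k, 1 ≤ k → k ≤ N →
      Γ k = (1 / lam) • (Γ (k - 1) - Γ (k - 1) * Q k * (S k)⁻¹ * (Q k)ᵀ * Γ (k - 1)))
    (hA0 : (A 0).IsSymm) (hΓ0 : (Γ 0).IsSymm) :
    1 - Γ N * A N =
      (((List.range N).map fun j =>
          1 - Γ (N - j - 1) * Q (N - j) * (S (N - j))⁻¹ * (Q (N - j))ᵀ).prod) *
        (1 - Γ 0 * A 0) := by
  have hDD : D * D = 1 := by
    rw [hD, Matrix.diagonal_mul_diagonal]
    ext i j
    fin_cases i <;> fin_cases j <;> simp [Matrix.one_apply]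
  exact rls_aux n lam (ne_of_gt hlam) A Γ Q D hDD S N hS hSinv hA hΓ
end
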